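/- The reduced evolution system extracted from the conformal Einstein field equations and the structure equations in Stewart's gauge — namely D_0 Σ = B_0(Σ,Γ,s)Σ for the derivatives of the conformal factor, D_1 e = B_1(Γ,e)e for the frame components, D_2 Γ = B_2(Γ,φ,Φ)Γ for the spin connection coefficients, D_3 Φ = B_3 Φ for the trace-free Ricci components, and D_4 φ = B_4 φ for the rescaled Weyl components — is symmetric hyperbolic with respect to the direction τ^a = l^a + n^a: writing D_3 = A_3^μ ∂_μ and D_4 = A_4^μ ∂_μ, the matrices A_3^μ and A_4^μ are Hermitian and A_3^μ(l_μ + n_μ) = diag(1,3,2,2,3,1) and A_4^μ(l_μ + n_μ) = diag(1,2,2,2,1) are positive definite. -/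

import Mathlib

/-!
Every `u`-symbol is `Q` times a constant real diagonal matrix, so contracting with
`l_μ + n_μ = (1, 1/Q, 0, 0)` cancels `Q` and leaves constant diagonal matrices with positive
entries. The angular symbols `A^{x^A}` have the real coefficient `C^A` on the diagonal and
`P^A`, `P̄^A` in mirror positions off it, which is exactly Hermitian symmetry.
-/

noncomputable section

open Matrix

open scoped ComplexOrder

/-! The principal symbol matrices of the reduced evolution system extracted from the
conformal Einstein field equations in Stewart's gauge, at a point where the frame
components take the values `Q` (real), `C^A` (real) and `P^A` (complex).  The NP frame
is `l = ∂_v + C^A∂_A`, `n = Q∂_u`, `m = P^A∂_A`, and the covector `l_μ + n_μ` has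
components `(1, 1/Q, 0, 0)` in the coordinates `(v, u, x^A)`. -/

/-- `A₃^v` for the system `D₃Φ = B₃Φ`. -/
def A3v : Matrix (Fin 6) (Fin 6) ℂ := diagonal ![0, 1, 1, 1, 2, 1]

/-- `A₃^u`. -/
def A3u (Q : ℝ) : Matrix (Fin 6) (Fin 6) ℂ :=
  diagonal ![(Q : ℂ), 2 * Q, Q, Q, Q, 0]

/-- `A₃^{x^A}`. -/
def A3ang (C : Fin 2 → ℝ) (P : Fin 2 → ℂ) (A : Fin 2) : Matrix (Fin 6) (Fin 6) ℂ :=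
  !![0, -(star (P A)), 0, 0, 0, 0;
     -(P A), (C A : ℂ), -(P A), -(star (P A)), 0, 0;
     0, -(star (P A)), (C A : ℂ), 0, -(star (P A)), 0;
     0, -(P A), 0, (C A : ℂ), -(P A), 0;
     0, 0, -(P A), -(star (P A)), 2 * (C A : ℂ), -(P A);
     0, 0, 0, 0, -(star (P A)), (C A : ℂ)]

/-- `A₄^v` for the system `D₄φ = B₄φ`. -/
def A4v : Matrix (Fin 5) (Fin 5) ℂ := diagonal ![0, 1, 1, 1, 1]

/-- `A₄^u`. -/
def A4u (Q : ℝ) : Matrix (Fin 5) (Fin 5) ℂ := diagonal ![(Q : ℂ), Q, Q, Q, 0]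

/-- `A₄^{x^A}`. -/
def A4ang (C : Fin 2 → ℝ) (P : Fin 2 → ℂ) (A : Fin 2) : Matrix (Fin 5) (Fin 5) ℂ :=
  !![0, -(P A), 0, 0, 0;
     -(star (P A)), (C A : ℂ), -(P A), 0, 0;
     0, -(star (P A)), (C A : ℂ), -(P A), 0;
     0, 0, -(star (P A)), (C A : ℂ), -(P A);
     0, 0, 0, -(star (P A)), (C A : ℂ)]

/-- Principal symbols of the diagonal operators `D₀ = diag(Δ,…,Δ)` (5 components),
`D₁ = diag(Δ,Δ,D)` and `D₂ = diag(Δ×6, D×3)`: `v`-coefficient matrices. -/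
def A0v : Matrix (Fin 5) (Fin 5) ℂ := diagonal ![0, 0, 0, 0, 0]
def A0u (Q : ℝ) : Matrix (Fin 5) (Fin 5) ℂ := diagonal ![(Q : ℂ), Q, Q, Q, Q]
def A1v : Matrix (Fin 3) (Fin 3) ℂ := diagonal ![0, 0, 1]
def A1u (Q : ℝ) : Matrix (Fin 3) (Fin 3) ℂ := diagonal ![(Q : ℂ), Q, 0]
def A2v : Matrix (Fin 9) (Fin 9) ℂ := diagonal ![0, 0, 0, 0, 0, 0, 1, 1, 1]
def A2u (Q : ℝ) : Matrix (Fin 9) (Fin 9) ℂ :=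
  diagonal ![(Q : ℂ), Q, Q, Q, Q, Q, 0, 0, 0]

lemma Matrix.diagonal_add_inv_smul_diagonal_smul {n R : Type*} [DecidableEq n] [DivisionRing R]
    {c : R} (hc : c ≠ 0) (v u : n → R) :
    diagonal v + c⁻¹ • diagonal (c • u) = diagonal (v + u) := by
  rw [← diagonal_smul, inv_smul_smul₀ hc, diagonal_add]
  rfl

lemma A3ang_isHermitian (C : Fin 2 → ℝ) (P : Fin 2 → ℂ) (A : Fin 2) :
    (A3ang C P A).IsHermitian := by
  ext i j
  fin_cases i <;> fin_cases j <;> simp [A3ang]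

lemma A4ang_isHermitian (C : Fin 2 → ℝ) (P : Fin 2 → ℂ) (A : Fin 2) :
    (A4ang C P A).IsHermitian := by
  ext i j
  fin_cases i <;> fin_cases j <;> simp [A4ang]

section Contraction

variable {Q : ℝ} (hQ : Q ≠ 0)
include hQ

lemma A3v_add_inv_smul_A3u : A3v + (Q⁻¹ : ℂ) • A3u Q = diagonal ![1, 3, 2, 2, 3, 1] := by
  have hA3u : A3u Q = diagonal ((Q : ℂ) • ![1, 2, 1, 1, 1, 0]) := by simp [A3u, mul_comm]
  rw [hA3u, A3v, diagonal_add_inv_smul_diagonal_smul (Complex.ofReal_ne_zero.2 hQ)]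
  congr 1; ext i; fin_cases i <;> norm_num

lemma A4v_add_inv_smul_A4u : A4v + (Q⁻¹ : ℂ) • A4u Q = diagonal ![1, 2, 2, 2, 1] := by
  have hA4u : A4u Q = diagonal ((Q : ℂ) • ![1, 1, 1, 1, 0]) := by simp [A4u]
  rw [hA4u, A4v, diagonal_add_inv_smul_diagonal_smul (Complex.ofReal_ne_zero.2 hQ)]
  congr 1; ext i; fin_cases i <;> norm_num

lemma A0v_add_inv_smul_A0u : A0v + (Q⁻¹ : ℂ) • A0u Q = 1 := by
  have hA0u : A0u Q = diagonal ((Q : ℂ) • ![1, 1, 1, 1, 1]) := by simp [A0u]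
  rw [hA0u, A0v, diagonal_add_inv_smul_diagonal_smul (Complex.ofReal_ne_zero.2 hQ),
    ← diagonal_one]
  congr 1; ext i; fin_cases i <;> norm_num

lemma A1v_add_inv_smul_A1u : A1v + (Q⁻¹ : ℂ) • A1u Q = 1 := by
  have hA1u : A1u Q = diagonal ((Q : ℂ) • ![1, 1, 0]) := by simp [A1u]
  rw [hA1u, A1v, diagonal_add_inv_smul_diagonal_smul (Complex.ofReal_ne_zero.2 hQ),
    ← diagonal_one]
  congr 1; ext i; fin_cases i <;> norm_num

lemma A2v_add_inv_smul_A2u : A2v + (Q⁻¹ : ℂ) • A2u Q = 1 := by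
  have hA2u : A2u Q = diagonal ((Q : ℂ) • ![1, 1, 1, 1, 1, 1, 0, 0, 0]) := by simp [A2u]
  rw [hA2u, A2v, diagonal_add_inv_smul_diagonal_smul (Complex.ofReal_ne_zero.2 hQ),
    ← diagonal_one]
  congr 1; ext i; fin_cases i <;> norm_num

end Contraction

/-- **Symmetric hyperbolicity of the reduced conformal evolution system.**
All the principal symbol matrices are Hermitian, and their contraction with the
covector `τ_μ = l_μ + n_μ = (1, 1/Q, 0, 0)` gives `diag(1,3,2,2,3,1)` for `D₃`,
`diag(1,2,2,2,1)` for `D₄` and the identity for `D₀, D₁, D₂`; these matrices are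
positive definite.  Hence the system is symmetric hyperbolic with respect to
`τ^a = l^a + n^a`. -/
theorem reduced_system_symmetric_hyperbolic
    (Q : ℝ) (hQ : 0 < Q) (C : Fin 2 → ℝ) (P : Fin 2 → ℂ) :
    -- all the principal symbol matrices are Hermitian
    (A3v.IsHermitian ∧ (A3u Q).IsHermitian ∧ (∀ A, (A3ang C P A).IsHermitian)) ∧
    (A4v.IsHermitian ∧ (A4u Q).IsHermitian ∧ (∀ A, (A4ang C P A).IsHermitian)) ∧
    (A0v.IsHermitian ∧ (A0u Q).IsHermitian ∧ A1v.IsHermitian ∧ (A1u Q).IsHermitian ∧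
      A2v.IsHermitian ∧ (A2u Q).IsHermitian) ∧
    -- `A₃^μ (l_μ + n_μ) = diag(1,3,2,2,3,1)` is positive definite
    (A3v + (Q⁻¹ : ℂ) • A3u Q = diagonal ![1, 3, 2, 2, 3, 1] ∧
      (diagonal ![1, 3, 2, 2, 3, 1] : Matrix (Fin 6) (Fin 6) ℂ).PosDef) ∧
    -- `A₄^μ (l_μ + n_μ) = diag(1,2,2,2,1)` is positive definite
    (A4v + (Q⁻¹ : ℂ) • A4u Q = diagonal ![1, 2, 2, 2, 1] ∧
      (diagonal ![1, 2, 2, 2, 1] : Matrix (Fin 5) (Fin 5) ℂ).PosDef) ∧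
    -- the contractions for `D₀`, `D₁`, `D₂` are the identity, which is positive definite
    (A0v + (Q⁻¹ : ℂ) • A0u Q = 1 ∧ A1v + (Q⁻¹ : ℂ) • A1u Q = 1 ∧
      A2v + (Q⁻¹ : ℂ) • A2u Q = 1 ∧
      (1 : Matrix (Fin 9) (Fin 9) ℂ).PosDef) := by
  refine ⟨⟨?_, ?_, A3ang_isHermitian C P⟩, ⟨?_, ?_, A4ang_isHermitian C P⟩,
    ⟨?_, ?_, ?_, ?_, ?_, ?_⟩, ⟨A3v_add_inv_smul_A3u hQ.ne', ?_⟩, ⟨A4v_add_inv_smul_A4u hQ.ne', ?_⟩,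
    A0v_add_inv_smul_A0u hQ.ne', A1v_add_inv_smul_A1u hQ.ne', A2v_add_inv_smul_A2u hQ.ne',
    PosDef.one⟩
  all_goals simp [A3v, A3u, A4v, A4u, A0v, A0u, A1v, A1u, A2v, A2u, isHermitian_diagonal_iff,
    isSelfAdjoint_iff, map_ofNat, Fin.forall_fin_succ]
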